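/- Let ξ̄ > 0 and L > 0. Suppose g : ℝ → ℝ is Lipschitz continuous with constant L and Ū : [0,ξ̄] → ℝ is continuous. Then there exists a unique continuous function U : [0,∞)×[0,ξ̄] → ℝ satisfying the integral equation U(t,ξ) = Ū(ξ) + (1/2)∫₀^t ∫₀^ξ g(U(s,η)) dη ds for all t ≥ 0 and ξ ∈ [0,ξ̄]. -/
import Mathlib
open MeasureTheory Set Real

set_option maxHeartbeats 1000000
namespace Stmt1

noncomputable def ext (ξbar T : ℝ) (hξ : 0 ≤ ξbar) (hT : 0 ≤ T)
    (f : Icc (0:ℝ) T × Icc (0:ℝ) ξbar → ℝ) (s η : ℝ) : ℝ :=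
  f (projIcc 0 T hT s, projIcc 0 ξbar hξ η)

lemma continuous_ext (ξbar T : ℝ) (hξ : 0 ≤ ξbar) (hT : 0 ≤ T)
    {f : Icc (0:ℝ) T × Icc (0:ℝ) ξbar → ℝ} (hf : Continuous f) :
    Continuous fun q : ℝ × ℝ => ext ξbar T hξ hT f q.1 q.2 :=
  hf.comp ((continuous_projIcc.comp continuous_fst).prodMk
    (continuous_projIcc.comp continuous_snd))

lemma cont_inner (ξbar T : ℝ) (hξ : 0 ≤ ξbar) (hT : 0 ≤ T) (g : ℝ → ℝ) (hg : Continuous g)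
    {f : Icc (0:ℝ) T × Icc (0:ℝ) ξbar → ℝ} (hf : Continuous f) :
    Continuous fun p : ℝ × ℝ => ∫ η in (0:ℝ)..p.2, g (ext ξbar T hξ hT f p.1 η) := by
  have h : Continuous fun q : ℝ × ℝ => g (ext ξbar T hξ hT f q.1 q.2) :=
    hg.comp (continuous_ext ξbar T hξ hT hf)
  apply intervalIntegral.continuous_parametric_intervalIntegral_of_continuous
    (f := fun (p : ℝ × ℝ) (η : ℝ) => g (ext ξbar T hξ hT f p.1 η)) ?_ continuous_snd
  exact h.comp ((continuous_fst.comp continuous_fst).prodMk continuous_snd)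

lemma cont_inner' (ξbar T : ℝ) (hξ : 0 ≤ ξbar) (hT : 0 ≤ T) (g : ℝ → ℝ) (hg : Continuous g)
    {f : Icc (0:ℝ) T × Icc (0:ℝ) ξbar → ℝ} (hf : Continuous f) (ξ : ℝ) :
    Continuous fun s : ℝ => ∫ η in (0:ℝ)..ξ, g (ext ξbar T hξ hT f s η) := by
  apply intervalIntegral.continuous_parametric_intervalIntegral_of_continuous
    (f := fun (s : ℝ) (η : ℝ) => g (ext ξbar T hξ hT f s η)) ?_ continuous_const
  exact hg.comp (continuous_ext ξbar T hξ hT hf)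

lemma cont_int (ξbar T : ℝ) (hξ : 0 ≤ ξbar) (hT : 0 ≤ T) (g : ℝ → ℝ) (hg : Continuous g)
    {f : Icc (0:ℝ) T × Icc (0:ℝ) ξbar → ℝ} (hf : Continuous f) :
    Continuous fun p : ℝ × ℝ =>
      ∫ s in (0:ℝ)..p.1, ∫ η in (0:ℝ)..p.2, g (ext ξbar T hξ hT f s η) := by
  have hinner := cont_inner ξbar T hξ hT g hg hf
  apply intervalIntegral.continuous_parametric_intervalIntegral_of_continuous
    (f := fun (p : ℝ × ℝ) (s : ℝ) => ∫ η in (0:ℝ)..p.2, g (ext ξbar T hξ hT f s η)) ?_ continuous_fst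
  exact hinner.comp (continuous_snd.prodMk (continuous_snd.comp continuous_fst))

/-- The Picard operator. -/
noncomputable def op (ξbar T : ℝ) (hξ : 0 ≤ ξbar) (hT : 0 ≤ T) (g Ub : ℝ → ℝ)
    (hg : Continuous g) (hUb : Continuous Ub)
    (f : C(Icc (0:ℝ) T × Icc (0:ℝ) ξbar, ℝ)) : C(Icc (0:ℝ) T × Icc (0:ℝ) ξbar, ℝ) :=
  ⟨fun p => Ub p.2 + (1/2) * ∫ s in (0:ℝ)..(p.1:ℝ), ∫ η in (0:ℝ)..(p.2:ℝ),
      g (ext ξbar T hξ hT f s η), by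
    have hc : Continuous fun p : Icc (0:ℝ) T × Icc (0:ℝ) ξbar => ((p.1 : ℝ), (p.2 : ℝ)) :=
      (continuous_subtype_val.comp continuous_fst).prodMk
        (continuous_subtype_val.comp continuous_snd)
    have := (cont_int ξbar T hξ hT g hg f.continuous).comp hc
    exact ((hUb.comp (continuous_subtype_val.comp continuous_snd)).add
      (continuous_const.mul this))⟩

lemma op_apply (ξbar T : ℝ) (hξ : 0 ≤ ξbar) (hT : 0 ≤ T) (g Ub : ℝ → ℝ)
    (hg : Continuous g) (hUb : Continuous Ub)
    (f : C(Icc (0:ℝ) T × Icc (0:ℝ) ξbar, ℝ)) (p : Icc (0:ℝ) T × Icc (0:ℝ) ξbar) :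
    op ξbar T hξ hT g Ub hg hUb f p = Ub p.2 + (1/2) * ∫ s in (0:ℝ)..(p.1:ℝ),
      ∫ η in (0:ℝ)..(p.2:ℝ), g (ext ξbar T hξ hT f s η) := rfl

/-- The key iterate estimate. -/
lemma key (ξbar T L : ℝ) (hξ : 0 ≤ ξbar) (hT : 0 ≤ T) (hL : 0 ≤ L) (g Ub : ℝ → ℝ)
    (hg : Continuous g) (hUb : Continuous Ub)
    (hgL : ∀ u v, |g u - g v| ≤ L * |u - v|)
    (f₁ f₂ : C(Icc (0:ℝ) T × Icc (0:ℝ) ξbar, ℝ)) (n : ℕ)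
    (p : Icc (0:ℝ) T × Icc (0:ℝ) ξbar) :
    |((op ξbar T hξ hT g Ub hg hUb)^[n] f₁) p - ((op ξbar T hξ hT g Ub hg hUb)^[n] f₂) p| ≤
      (L * ξbar / 2)^n * (p.1:ℝ)^n / n.factorial * dist f₁ f₂ := by
  set c : ℝ := L * ξbar / 2 with hc
  have hc0 : 0 ≤ c := by positivity
  set D : ℝ := dist f₁ f₂ with hD
  have hD0 : 0 ≤ D := dist_nonneg
  induction n generalizing p with
  | zero =>
      simpa [Real.dist_eq] using ContinuousMap.dist_apply_le_dist (f := f₁) (g := f₂) p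
  | succ n ih =>
      set F := op ξbar T hξ hT g Ub hg hUb with hF
      set u : C(Icc (0:ℝ) T × Icc (0:ℝ) ξbar, ℝ) := F^[n] f₁ with hu
      set v : C(Icc (0:ℝ) T × Icc (0:ℝ) ξbar, ℝ) := F^[n] f₂ with hv
      rw [Function.iterate_succ_apply', Function.iterate_succ_apply', ← hu, ← hv]
      obtain ⟨⟨t, ht0, htT⟩, ⟨ξ, hξ0, hξξ⟩⟩ := p
      have hUcont : Continuous fun q : ℝ × ℝ => g (ext ξbar T hξ hT u q.1 q.2) :=
        hg.comp (continuous_ext ξbar T hξ hT u.continuous)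
      have hVcont : Continuous fun q : ℝ × ℝ => g (ext ξbar T hξ hT v q.1 q.2) :=
        hg.comp (continuous_ext ξbar T hξ hT v.continuous)
      -- the difference of the two values
      have hval : (F u) (⟨t, ht0, htT⟩, ⟨ξ, hξ0, hξξ⟩) - (F v) (⟨t, ht0, htT⟩, ⟨ξ, hξ0, hξξ⟩)
          = (1/2) * ∫ s in (0:ℝ)..t,
              ((∫ η in (0:ℝ)..ξ, g (ext ξbar T hξ hT u s η))
                - (∫ η in (0:ℝ)..ξ, g (ext ξbar T hξ hT v s η))) := by
        rw [hF, op_apply, op_apply]; dsimp only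
        have hiu : IntervalIntegrable
            (fun s => ∫ η in (0:ℝ)..ξ, g (ext ξbar T hξ hT u s η)) volume 0 t :=
          (cont_inner' ξbar T hξ hT g hg u.continuous ξ).intervalIntegrable _ _
        have hiv : IntervalIntegrable
            (fun s => ∫ η in (0:ℝ)..ξ, g (ext ξbar T hξ hT v s η)) volume 0 t :=
          (cont_inner' ξbar T hξ hT g hg v.continuous ξ).intervalIntegrable _ _
        rw [intervalIntegral.integral_sub hiu hiv]
        ring
      have hA := cont_inner' ξbar T hξ hT g hg u.continuous ξ
      have hB := cont_inner' ξbar T hξ hT g hg v.continuous ξ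
      have hAB : ∀ s ∈ Icc (0:ℝ) t,
          |(∫ η in (0:ℝ)..ξ, g (ext ξbar T hξ hT u s η))
            - ∫ η in (0:ℝ)..ξ, g (ext ξbar T hξ hT v s η)|
            ≤ L * ξbar * (c ^ n * s ^ n / n.factorial * D) := by
        intro s hs
        have hgu : Continuous fun η : ℝ => g (ext ξbar T hξ hT u s η) :=
          hUcont.comp (continuous_const.prodMk continuous_id)
        have hgv : Continuous fun η : ℝ => g (ext ξbar T hξ hT v s η) :=
          hVcont.comp (continuous_const.prodMk continuous_id)
        rw [← intervalIntegral.integral_sub (hgu.intervalIntegrable _ _)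
          (hgv.intervalIntegrable _ _)]
        have hpt : ∀ η ∈ Icc (0:ℝ) ξ,
            |g (ext ξbar T hξ hT u s η) - g (ext ξbar T hξ hT v s η)|
              ≤ L * (c ^ n * s ^ n / n.factorial * D) := by
          intro η hη
          have hq := ih (projIcc 0 T hT s, projIcc 0 ξbar hξ η)
          have hps : ((projIcc 0 T hT s : Icc (0:ℝ) T) : ℝ) = s := by
            rw [projIcc_of_mem hT ⟨hs.1, hs.2.trans htT⟩]
          rw [hps] at hq
          calc |g (ext ξbar T hξ hT u s η) - g (ext ξbar T hξ hT v s η)|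
              ≤ L * |ext ξbar T hξ hT u s η - ext ξbar T hξ hT v s η| := hgL _ _
            _ ≤ L * (c ^ n * s ^ n / n.factorial * D) :=
                mul_le_mul_of_nonneg_left hq hL
        calc |∫ η in (0:ℝ)..ξ,
                (g (ext ξbar T hξ hT u s η) - g (ext ξbar T hξ hT v s η))|
            ≤ ∫ η in (0:ℝ)..ξ,
                |g (ext ξbar T hξ hT u s η) - g (ext ξbar T hξ hT v s η)| :=
              intervalIntegral.abs_integral_le_integral_abs hξ0
          _ ≤ ∫ _η in (0:ℝ)..ξ, (L * (c ^ n * s ^ n / n.factorial * D)) :=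
              intervalIntegral.integral_mono_on hξ0
                ((hgu.sub hgv).abs.intervalIntegrable _ _) intervalIntegrable_const hpt
          _ = ξ * (L * (c ^ n * s ^ n / n.factorial * D)) := by simp; ring
          _ ≤ ξbar * (L * (c ^ n * s ^ n / n.factorial * D)) := by
              have hnn : 0 ≤ L * (c ^ n * s ^ n / n.factorial * D) := by
                have := hs.1; positivity
              exact mul_le_mul_of_nonneg_right hξξ hnn
          _ = L * ξbar * (c ^ n * s ^ n / n.factorial * D) := by ring
      have hfact : ((n + 1).factorial : ℝ) = (n + 1) * n.factorial := by
        rw [Nat.factorial_succ]; push_cast; ring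
      have hfn : (n.factorial : ℝ) ≠ 0 := by positivity
      calc |(F u) (⟨t, ht0, htT⟩, ⟨ξ, hξ0, hξξ⟩) - (F v) (⟨t, ht0, htT⟩, ⟨ξ, hξ0, hξξ⟩)|
          = (1/2) * |∫ s in (0:ℝ)..t,
              ((∫ η in (0:ℝ)..ξ, g (ext ξbar T hξ hT u s η))
                - ∫ η in (0:ℝ)..ξ, g (ext ξbar T hξ hT v s η))| := by
            rw [hval, abs_mul]; norm_num
        _ ≤ (1/2) * ∫ s in (0:ℝ)..t,
              |(∫ η in (0:ℝ)..ξ, g (ext ξbar T hξ hT u s η))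
                - ∫ η in (0:ℝ)..ξ, g (ext ξbar T hξ hT v s η)| := by
            gcongr
            exact intervalIntegral.abs_integral_le_integral_abs ht0
        _ ≤ (1/2) * ∫ s in (0:ℝ)..t, (L * ξbar * (c ^ n * s ^ n / n.factorial * D)) := by
            gcongr
            exact intervalIntegral.integral_mono_on ht0
              ((hA.sub hB).abs.intervalIntegrable _ _)
              (Continuous.intervalIntegrable (by fun_prop) _ _) hAB
        _ = (1/2) * ((L * ξbar * (c ^ n / n.factorial * D)) * (t ^ (n+1) / (n+1))) := by
            have hrw : (∫ s in (0:ℝ)..t, L * ξbar * (c ^ n * s ^ n / n.factorial * D))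
                = (L * ξbar * (c ^ n / n.factorial * D)) * ∫ s in (0:ℝ)..t, s ^ n := by
              rw [← intervalIntegral.integral_const_mul]
              apply intervalIntegral.integral_congr
              intro s _; ring
            rw [hrw, integral_pow]
            simp
        _ = c ^ (n+1) * t ^ (n+1) / ((n+1).factorial : ℝ) * D := by
            rw [hfact, hc]
            field_simp
            ring

lemma dist_iter (ξbar T L : ℝ) (hξ : 0 ≤ ξbar) (hT : 0 ≤ T) (hL : 0 ≤ L) (g Ub : ℝ → ℝ)
    (hg : Continuous g) (hUb : Continuous Ub)
    (hgL : ∀ u v, |g u - g v| ≤ L * |u - v|)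
    (n : ℕ) (f₁ f₂ : C(Icc (0:ℝ) T × Icc (0:ℝ) ξbar, ℝ)) :
    dist ((op ξbar T hξ hT g Ub hg hUb)^[n] f₁) ((op ξbar T hξ hT g Ub hg hUb)^[n] f₂)
      ≤ (L * ξbar / 2 * T)^n / n.factorial * dist f₁ f₂ := by
  have h0 : (0:ℝ) ≤ (L * ξbar / 2 * T)^n / n.factorial * dist f₁ f₂ := by positivity
  rw [ContinuousMap.dist_le h0]
  intro p
  have hk := key ξbar T L hξ hT hL g Ub hg hUb hgL f₁ f₂ n p
  rw [Real.dist_eq]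
  refine hk.trans ?_
  have hp0 : (0:ℝ) ≤ (p.1:ℝ) := p.1.2.1
  have hp1 : (p.1:ℝ) ≤ T := p.1.2.2
  rw [mul_pow]
  gcongr

lemma exists_unique_fixed (ξbar T L : ℝ) (hξ : 0 ≤ ξbar) (hT : 0 ≤ T) (hL : 0 ≤ L)
    (g Ub : ℝ → ℝ) (hg : Continuous g) (hUb : Continuous Ub)
    (hgL : ∀ u v, |g u - g v| ≤ L * |u - v|) :
    ∃! f : C(Icc (0:ℝ) T × Icc (0:ℝ) ξbar, ℝ), op ξbar T hξ hT g Ub hg hUb f = f := by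
  set F := op ξbar T hξ hT g Ub hg hUb with hFdef
  have hd := dist_iter ξbar T L hξ hT hL g Ub hg hUb hgL
  obtain ⟨n, hn⟩ : ∃ n : ℕ, (L*ξbar/2*T)^n / n.factorial < 1 := by
    have h := FloorSemiring.tendsto_pow_div_factorial_atTop (K := ℝ) (L*ξbar/2*T)
    exact (h.eventually_lt_const (by norm_num : (0:ℝ) < 1)).exists
  set K : NNReal := Real.toNNReal ((L*ξbar/2*T)^n / n.factorial) with hK
  have hcon : ContractingWith K (F^[n]) := by
    constructor
    · exact_mod_cast Real.toNNReal_lt_one.2 hn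
    · apply LipschitzWith.of_dist_le_mul
      intro f₁ f₂
      refine (hd n f₁ f₂).trans ?_
      rw [hK, Real.coe_toNNReal _ (by positivity)]
  let x := ContractingWith.fixedPoint (F^[n]) hcon
  have hx : Function.IsFixedPt (F^[n]) x := hcon.fixedPoint_isFixedPt
  have hFx : Function.IsFixedPt (F^[n]) (F x) := by
    have h2 : F^[n] (F x) = F (F^[n] x) :=
      (Function.iterate_succ_apply F n x).symm.trans (Function.iterate_succ_apply' F n x)
    show F^[n] (F x) = F x
    rw [h2, hx]
  refine ⟨x, hcon.fixedPoint_unique' hFx hx, ?_⟩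
  intro y hy
  exact hcon.fixedPoint_unique' (Function.IsFixedPt.iterate hy n) hx

/-- The integral equation satisfied by the extension of a fixed point. -/
lemma fixed_eqn (ξbar T : ℝ) (hξ : 0 ≤ ξbar) (hT : 0 ≤ T) (g Ub : ℝ → ℝ)
    (hg : Continuous g) (hUb : Continuous Ub)
    {f : C(Icc (0:ℝ) T × Icc (0:ℝ) ξbar, ℝ)} (hf : op ξbar T hξ hT g Ub hg hUb f = f)
    {t ξ : ℝ} (ht : t ∈ Icc (0:ℝ) T) (hξm : ξ ∈ Icc (0:ℝ) ξbar) :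
    ext ξbar T hξ hT f t ξ
      = Ub ξ + (1/2) * ∫ s in (0:ℝ)..t, ∫ η in (0:ℝ)..ξ, g (ext ξbar T hξ hT f s η) := by
  have h1 : ext ξbar T hξ hT f t ξ = f (⟨t, ht⟩, ⟨ξ, hξm⟩) := by
    simp [ext, projIcc_of_mem hT ht, projIcc_of_mem hξ hξm]
  rw [h1]
  conv_lhs => rw [← hf]
  rw [op_apply]

/-- Fixed points at different horizons agree. -/
lemma agree (ξbar L T₁ T₂ : ℝ) (hξ : 0 ≤ ξbar) (hT₁ : 0 ≤ T₁) (hT₂ : 0 ≤ T₂)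
    (h12 : T₁ ≤ T₂) (hL : 0 ≤ L) (g Ub : ℝ → ℝ) (hg : Continuous g) (hUb : Continuous Ub)
    (hgL : ∀ u v, |g u - g v| ≤ L * |u - v|)
    {f₁ : C(Icc (0:ℝ) T₁ × Icc (0:ℝ) ξbar, ℝ)} {f₂ : C(Icc (0:ℝ) T₂ × Icc (0:ℝ) ξbar, ℝ)}
    (hf₁ : op ξbar T₁ hξ hT₁ g Ub hg hUb f₁ = f₁)
    (hf₂ : op ξbar T₂ hξ hT₂ g Ub hg hUb f₂ = f₂) :
    ∀ p : Icc (0:ℝ) T₁ × Icc (0:ℝ) ξbar, f₁ p = ext ξbar T₂ hξ hT₂ f₂ p.1 p.2 := by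
  have hcw : Continuous fun p : Icc (0:ℝ) T₁ × Icc (0:ℝ) ξbar =>
      ext ξbar T₂ hξ hT₂ f₂ (p.1:ℝ) (p.2:ℝ) := by
    have hc : Continuous fun p : Icc (0:ℝ) T₁ × Icc (0:ℝ) ξbar => ((p.1 : ℝ), (p.2 : ℝ)) :=
      (continuous_subtype_val.comp continuous_fst).prodMk
        (continuous_subtype_val.comp continuous_snd)
    exact (continuous_ext ξbar T₂ hξ hT₂ f₂.continuous).comp hc
  set w : C(Icc (0:ℝ) T₁ × Icc (0:ℝ) ξbar, ℝ) := ⟨_, hcw⟩ with hwdef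
  have hw : op ξbar T₁ hξ hT₁ g Ub hg hUb w = w := by
    ext p
    obtain ⟨⟨t, ht0, ht1⟩, ⟨ξ, hξ0, hξ1⟩⟩ := p
    rw [op_apply]
    have hwp : w (⟨t, ht0, ht1⟩, ⟨ξ, hξ0, hξ1⟩) = ext ξbar T₂ hξ hT₂ f₂ t ξ := rfl
    dsimp only
    rw [hwp, fixed_eqn ξbar T₂ hξ hT₂ g Ub hg hUb hf₂ ⟨ht0, ht1.trans h12⟩ ⟨hξ0, hξ1⟩]
    congr 1
    congr 1
    apply intervalIntegral.integral_congr
    intro s hs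
    rw [uIcc_of_le ht0] at hs
    have hinner : ∀ η : ℝ, ext ξbar T₁ hξ hT₁ w s η = ext ξbar T₂ hξ hT₂ f₂ s η := by
      intro η
      show ext ξbar T₂ hξ hT₂ f₂ ((projIcc 0 T₁ hT₁ s : Icc (0:ℝ) T₁) : ℝ)
          ((projIcc 0 ξbar hξ η : Icc (0:ℝ) ξbar) : ℝ) = ext ξbar T₂ hξ hT₂ f₂ s η
      rw [projIcc_of_mem hT₁ ⟨hs.1, hs.2.trans ht1⟩]
      show f₂ (projIcc 0 T₂ hT₂ s,
          projIcc 0 ξbar hξ ((projIcc 0 ξbar hξ η : Icc (0:ℝ) ξbar) : ℝ)) = _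
      rw [projIcc_val]
      rfl
    simp only [hinner]
  have huw : w = f₁ :=
    (exists_unique_fixed ξbar T₁ L hξ hT₁ hL g Ub hg hUb hgL).unique hw hf₁
  intro p
  rw [← huw]
  rfl

end Stmt1

open Stmt1

/-- Existence and uniqueness of a continuous solution of the integral equation
`U(t,ξ) = Ū(ξ) + (1/2)∫₀^t ∫₀^ξ g(U(s,η)) dη ds` on `[0,∞) × [0,ξ̄]`. -/
theorem stmt1 (ξbar L : ℝ) (hξbar : 0 < ξbar) (hL : 0 < L)
    (g : ℝ → ℝ) (hg : ∀ u v : ℝ, |g u - g v| ≤ L * |u - v|)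
    (Ubar : ℝ → ℝ) (hUbar : ContinuousOn Ubar (Set.Icc 0 ξbar)) :
    ∃ U : ℝ → ℝ → ℝ,
      (ContinuousOn (Function.uncurry U) (Set.Ici 0 ×ˢ Set.Icc 0 ξbar) ∧
        ∀ t : ℝ, 0 ≤ t → ∀ ξ ∈ Set.Icc (0:ℝ) ξbar,
          U t ξ = Ubar ξ + (1 / 2) * ∫ s in (0:ℝ)..t, ∫ η in (0:ℝ)..ξ, g (U s η)) ∧
      ∀ V : ℝ → ℝ → ℝ,
        (ContinuousOn (Function.uncurry V) (Set.Ici 0 ×ˢ Set.Icc 0 ξbar) ∧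
          ∀ t : ℝ, 0 ≤ t → ∀ ξ ∈ Set.Icc (0:ℝ) ξbar,
            V t ξ = Ubar ξ + (1 / 2) * ∫ s in (0:ℝ)..t, ∫ η in (0:ℝ)..ξ, g (V s η)) →
        ∀ t : ℝ, 0 ≤ t → ∀ ξ ∈ Set.Icc (0:ℝ) ξbar, V t ξ = U t ξ := by
  have hξ : (0:ℝ) ≤ ξbar := hξbar.le
  have hL0 : (0:ℝ) ≤ L := hL.le
  have hgc : Continuous g := by
    have hlip : LipschitzWith L.toNNReal g := by
      apply LipschitzWith.of_dist_le_mul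
      intro u v
      rw [Real.dist_eq, Real.dist_eq, Real.coe_toNNReal _ hL0]
      exact hg u v
    exact hlip.continuous
  set Ub : ℝ → ℝ := fun ξ => Ubar ((projIcc 0 ξbar hξ ξ : Icc (0:ℝ) ξbar) : ℝ) with hUbdef
  have hUbc : Continuous Ub := by
    apply hUbar.comp_continuous (continuous_subtype_val.comp continuous_projIcc)
    intro x; exact (projIcc 0 ξbar hξ x).2
  have hUbeq : ∀ ξ ∈ Icc (0:ℝ) ξbar, Ub ξ = Ubar ξ := by
    intro ξ hξm
    rw [hUbdef]
    simp [projIcc_of_mem hξ hξm]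
  have hT : ∀ n : ℕ, (0:ℝ) ≤ (n:ℝ)+1 := fun n => by positivity
  have hEU : ∀ n : ℕ, ∃ f : C(Icc (0:ℝ) ((n:ℝ)+1) × Icc (0:ℝ) ξbar, ℝ),
      (op ξbar ((n:ℝ)+1) hξ (hT n) g Ub hgc hUbc f = f) ∧
      ∀ y, (op ξbar ((n:ℝ)+1) hξ (hT n) g Ub hgc hUbc y = y) → y = f := fun n =>
    exists_unique_fixed ξbar ((n:ℝ)+1) L hξ (hT n) hL0 g Ub hgc hUbc hg
  choose sol hsol huniq using hEU
  -- agreement of the extended solutions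
  have hagree : ∀ m n : ℕ, m ≤ n → ∀ t ∈ Icc (0:ℝ) ((m:ℝ)+1), ∀ ξ : ℝ,
      ext ξbar ((m:ℝ)+1) hξ (hT m) (sol m) t ξ = ext ξbar ((n:ℝ)+1) hξ (hT n) (sol n) t ξ := by
    intro m n hmn t ht ξ
    have h12 : ((m:ℝ)+1) ≤ (n:ℝ)+1 := by
      have : (m:ℝ) ≤ (n:ℝ) := Nat.cast_le.2 hmn
      linarith
    have ha := agree ξbar L ((m:ℝ)+1) ((n:ℝ)+1) hξ (hT m) (hT n) h12 hL0 g Ub hgc hUbc hg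
      (hsol m) (hsol n) (projIcc 0 ((m:ℝ)+1) (hT m) t, projIcc 0 ξbar hξ ξ)
    calc ext ξbar ((m:ℝ)+1) hξ (hT m) (sol m) t ξ
        = ext ξbar ((n:ℝ)+1) hξ (hT n) (sol n)
            ((projIcc 0 ((m:ℝ)+1) (hT m) t : Icc (0:ℝ) ((m:ℝ)+1)) : ℝ)
            ((projIcc 0 ξbar hξ ξ : Icc (0:ℝ) ξbar) : ℝ) := ha
      _ = ext ξbar ((n:ℝ)+1) hξ (hT n) (sol n) t ξ := by
          rw [projIcc_of_mem (hT m) ht]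
          show (sol n) (_, projIcc 0 ξbar hξ ((projIcc 0 ξbar hξ ξ : Icc (0:ℝ) ξbar) : ℝ)) = _
          rw [projIcc_val]
          rfl
  have hmaster : ∀ n : ℕ, ∀ t ∈ Icc (0:ℝ) ((n:ℝ)+1), ∀ ξ : ℝ,
      ext ξbar ((⌈t⌉₊:ℝ)+1) hξ (hT ⌈t⌉₊) (sol ⌈t⌉₊) t ξ
        = ext ξbar ((n:ℝ)+1) hξ (hT n) (sol n) t ξ := by
    intro n t ht ξ
    have htm : t ∈ Icc (0:ℝ) ((⌈t⌉₊:ℝ)+1) :=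
      ⟨ht.1, (Nat.le_ceil t).trans (by linarith)⟩
    have hc1 : ((⌈t⌉₊:ℝ)) ≤ ((max ⌈t⌉₊ n : ℕ):ℝ) := Nat.cast_le.2 (le_max_left _ _)
    have h1 := hagree ⌈t⌉₊ (max ⌈t⌉₊ n) (le_max_left _ _) t htm ξ
    have h2 := hagree n (max ⌈t⌉₊ n) (le_max_right _ _) t ht ξ
    rw [h1, h2]
  refine ⟨fun t ξ => ext ξbar ((⌈t⌉₊:ℝ)+1) hξ (hT ⌈t⌉₊) (sol ⌈t⌉₊) t ξ, ⟨?_, ?_⟩, ?_⟩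
  · -- continuity
    intro p hp
    obtain ⟨t, ξ⟩ := p
    rw [mem_prod] at hp
    set n := ⌈t⌉₊ with hn
    have hWc : Continuous (Function.uncurry
        (fun a b => ext ξbar ((n:ℝ)+1) hξ (hT n) (sol n) a b)) :=
      continuous_ext ξbar ((n:ℝ)+1) hξ (hT n) (sol n).continuous
    apply ContinuousWithinAt.congr_of_eventuallyEq hWc.continuousAt.continuousWithinAt
    · have hopen : IsOpen {q : ℝ × ℝ | q.1 < (n:ℝ)+1} :=
        isOpen_lt continuous_fst continuous_const
    -- membership
      have hmem : {q : ℝ × ℝ | q.1 < (n:ℝ)+1} ∈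
          nhdsWithin (t, ξ) ((Ici (0:ℝ)) ×ˢ (Icc (0:ℝ) ξbar)) := by
        apply mem_nhdsWithin_of_mem_nhds
        apply hopen.mem_nhds
        have := Nat.le_ceil t
        simp only [mem_setOf_eq]
        calc t ≤ (n:ℝ) := by exact_mod_cast this
          _ < (n:ℝ)+1 := by linarith
      filter_upwards [hmem, self_mem_nhdsWithin] with q hq1 hq2
      rw [mem_prod] at hq2
      exact hmaster n q.1 ⟨hq2.1, hq1.le⟩ q.2
    · exact hmaster n t ⟨hp.1, (Nat.le_ceil t).trans (by linarith)⟩ ξ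
  · -- the integral equation
    intro t ht ξ hξm
    set n := ⌈t⌉₊ with hn
    have htm : t ∈ Icc (0:ℝ) ((n:ℝ)+1) := ⟨ht, (Nat.le_ceil t).trans (by linarith)⟩
    have heq := fixed_eqn ξbar ((n:ℝ)+1) hξ (hT n) g Ub hgc hUbc (hsol n) htm hξm
    have hout : (∫ s in (0:ℝ)..t, ∫ η in (0:ℝ)..ξ,
          g (ext ξbar ((n:ℝ)+1) hξ (hT n) (sol n) s η))
        = ∫ s in (0:ℝ)..t, ∫ η in (0:ℝ)..ξ,
          g (ext ξbar ((⌈s⌉₊:ℝ)+1) hξ (hT ⌈s⌉₊) (sol ⌈s⌉₊) s η) := by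
      apply intervalIntegral.integral_congr
      intro s hs
      rw [uIcc_of_le ht] at hs
      apply intervalIntegral.integral_congr
      intro η hη
      exact congrArg g (hmaster n s ⟨hs.1, hs.2.trans htm.2⟩ η).symm
    show ext ξbar ((n:ℝ)+1) hξ (hT n) (sol n) t ξ = _
    rw [heq, hUbeq ξ hξm, hout]
  · -- uniqueness
    rintro V ⟨hVc, hVeq⟩ t ht ξ hξm
    set n := ⌈t⌉₊ with hn
    have htm : t ∈ Icc (0:ℝ) ((n:ℝ)+1) := ⟨ht, (Nat.le_ceil t).trans (by linarith)⟩
    have hvcont : Continuous fun p : Icc (0:ℝ) ((n:ℝ)+1) × Icc (0:ℝ) ξbar =>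
        V (p.1 : ℝ) (p.2 : ℝ) := by
      have hc : Continuous fun p : Icc (0:ℝ) ((n:ℝ)+1) × Icc (0:ℝ) ξbar =>
          ((p.1 : ℝ), (p.2 : ℝ)) :=
        (continuous_subtype_val.comp continuous_fst).prodMk
          (continuous_subtype_val.comp continuous_snd)
      have := hVc.comp_continuous hc ?_
      · exact this
      · intro p
        rw [mem_prod]
        exact ⟨p.1.2.1, p.2.2⟩
    set vC : C(Icc (0:ℝ) ((n:ℝ)+1) × Icc (0:ℝ) ξbar, ℝ) := ⟨_, hvcont⟩ with hvC
    have hv : op ξbar ((n:ℝ)+1) hξ (hT n) g Ub hgc hUbc vC = vC := by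
      ext p
      obtain ⟨⟨t', ht'0, ht'1⟩, ⟨ξ', hξ'0, hξ'1⟩⟩ := p
      rw [op_apply]
      have hvp : vC (⟨t', ht'0, ht'1⟩, ⟨ξ', hξ'0, hξ'1⟩) = V t' ξ' := rfl
      dsimp only
      rw [hvp, hVeq t' ht'0 ξ' ⟨hξ'0, hξ'1⟩, hUbeq ξ' ⟨hξ'0, hξ'1⟩]
      congr 1
      congr 1
      apply intervalIntegral.integral_congr
      intro s hs
      rw [uIcc_of_le ht'0] at hs
      apply intervalIntegral.integral_congr
      intro η hη
      rw [uIcc_of_le hξ'0] at hη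
      have hext : ext ξbar ((n:ℝ)+1) hξ (hT n) vC s η = V s η := by
        show vC (projIcc 0 ((n:ℝ)+1) (hT n) s, projIcc 0 ξbar hξ η) = V s η
        have hps : projIcc 0 ((n:ℝ)+1) (hT n) s = ⟨s, hs.1, hs.2.trans ht'1⟩ :=
          projIcc_of_mem _ ⟨hs.1, hs.2.trans ht'1⟩
        have hpη : projIcc 0 ξbar hξ η = ⟨η, hη.1, hη.2.trans hξ'1⟩ :=
          projIcc_of_mem _ ⟨hη.1, hη.2.trans hξ'1⟩
        rw [hps, hpη]
        rfl
      exact congrArg g hext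
    have hveq : vC = sol n := huniq n vC hv
    have h1 : V t ξ = vC (⟨t, htm⟩, ⟨ξ, hξm⟩) := rfl
    rw [h1, hveq]
    show (sol n) (⟨t, htm⟩, ⟨ξ, hξm⟩)
        = (sol n) (projIcc 0 ((n:ℝ)+1) (hT n) t, projIcc 0 ξbar hξ ξ)
    rw [projIcc_of_mem (hT n) htm, projIcc_of_mem hξ hξm]
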